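/- Let s, t ∈ ℂ and let 𝐬^z,𝐬^± (parameter s, acting on the first index) and 𝐭^z,𝐭^± (parameter t, acting on the second index) be the undeformed complex-spin Verma operators on the space with basis (|k,l⟩)_{k,l∈ℕ}. Define T = 𝐬⁺𝐭⁺ + 𝐬⁻𝐭⁻ + 2·𝐬^z𝐭^z and V = 𝐬⁺𝐭⁺ − 𝐬⁻𝐭⁻. Then [T,[T,V]] + 2(TV + VT) = 4·( s(s+1) + t(t+1) )·V. -/

import Mathlib

/-! All operators act on `|k,l⟩` by formulas polynomial in `k` and `l`, so they extend to weighted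
shifts on the lattice `ℤ × ℤ`. There the identity is one computation on a generic basis vector,
with no boundary cases: every term is a multiple of some `|k+a,l+a⟩`, and the coefficients agree as
polynomials in `k, l, s, t`. The span of `ℕ × ℕ` is invariant under the lattice operators, which
restrict to the given ones there, and intertwining relations are stable under sums, products and
scalar multiples, so the identity restricts. -/

noncomputable section

/-- Finitely supported functions on ℕ×ℕ, with basis `|k,l⟩ = single (k,l) 1`. -/
abbrev Wsp : Type := (ℕ × ℕ) →₀ ℂ

abbrev EndW : Type := Module.End ℂ Wsp

/-- The endomorphism sending the basis vector `|k,l⟩` to `v (k,l)`. -/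
def mkOpW (v : ℕ × ℕ → Wsp) : EndW :=
  Finsupp.lsum ℂ (fun a => LinearMap.toSpanSingleton ℂ Wsp (v a))

/-- `𝐬^z |k,l⟩ = (s−k)|k,l⟩`. -/
def sZu (s : ℂ) : EndW := mkOpW fun q => Finsupp.single q (s - (q.1:ℂ))

/-- `𝐬⁺ |k,l⟩ = k|k−1,l⟩`, with `𝐬⁺|0,l⟩ = 0`. -/
def sPu : EndW := mkOpW fun q => if q.1 = 0 then 0 else Finsupp.single (q.1 - 1, q.2) ((q.1:ℂ))

/-- `𝐬⁻ |k,l⟩ = (2s−k)|k+1,l⟩`. -/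
def sMu (s : ℂ) : EndW := mkOpW fun q => Finsupp.single (q.1 + 1, q.2) (2*s - (q.1:ℂ))

/-- `𝐭^z |k,l⟩ = (t−l)|k,l⟩`. -/
def tZu (t : ℂ) : EndW := mkOpW fun q => Finsupp.single q (t - (q.2:ℂ))

/-- `𝐭⁺ |k,l⟩ = l|k,l−1⟩`, with `𝐭⁺|k,0⟩ = 0`. -/
def tPu : EndW := mkOpW fun q => if q.2 = 0 then 0 else Finsupp.single (q.1, q.2 - 1) ((q.2:ℂ))

/-- `𝐭⁻ |k,l⟩ = (2t−l)|k,l+1⟩`. -/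
def tMu (t : ℂ) : EndW := mkOpW fun q => Finsupp.single (q.1, q.2 + 1) (2*t - (q.2:ℂ))

/-- `T = 𝐬⁺𝐭⁺ + 𝐬⁻𝐭⁻ + 2𝐬^z𝐭^z`. -/
def Tu (s t : ℂ) : EndW := sPu * tPu + sMu s * tMu t + (2:ℂ) • (sZu s * tZu t)

/-- `V = 𝐬⁺𝐭⁺ − 𝐬⁻𝐭⁻`. -/
def Vu (s t : ℂ) : EndW := sPu * tPu - sMu s * tMu t

section Intertwining

variable {R M N : Type*} [CommSemiring R]

def Intertwines [AddCommMonoid M] [Module R M] [AddCommMonoid N] [Module R N]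
    (ι : M →ₗ[R] N) (f : Module.End R M) (g : Module.End R N) : Prop :=
  ι ∘ₗ f = g ∘ₗ ι

namespace Intertwines

section AddCommMonoid

variable [AddCommMonoid M] [Module R M] [AddCommMonoid N] [Module R N] {ι : M →ₗ[R] N}
  {f₁ f₂ : Module.End R M} {g₁ g₂ : Module.End R N}

theorem add (h₁ : Intertwines ι f₁ g₁) (h₂ : Intertwines ι f₂ g₂) :
    Intertwines ι (f₁ + f₂) (g₁ + g₂) := by
  rw [Intertwines, LinearMap.comp_add, LinearMap.add_comp, h₁, h₂]

theorem mul (h₁ : Intertwines ι f₁ g₁) (h₂ : Intertwines ι f₂ g₂) :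
    Intertwines ι (f₁ * f₂) (g₁ * g₂) := by
  rw [Intertwines, Module.End.mul_eq_comp, Module.End.mul_eq_comp, ← LinearMap.comp_assoc, h₁,
    LinearMap.comp_assoc, h₂, LinearMap.comp_assoc]

theorem smul (h : Intertwines ι f₁ g₁) (c : R) : Intertwines ι (c • f₁) (c • g₁) := by
  rw [Intertwines, LinearMap.comp_smul, LinearMap.smul_comp, h]

theorem eq_of_injective (h₁ : Intertwines ι f₁ g₁) (h₂ : Intertwines ι f₂ g₂) (hg : g₁ = g₂)
    (hι : Function.Injective ι) : f₁ = f₂ := by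
  subst hg
  exact LinearMap.ext fun x => hι (congr($h₁ x).trans congr($h₂ x).symm)

end AddCommMonoid

theorem sub [AddCommGroup M] [Module R M] [AddCommGroup N] [Module R N] {ι : M →ₗ[R] N}
    {f₁ f₂ : Module.End R M} {g₁ g₂ : Module.End R N}
    (h₁ : Intertwines ι f₁ g₁) (h₂ : Intertwines ι f₂ g₂) :
    Intertwines ι (f₁ - f₂) (g₁ - g₂) := by
  rw [Intertwines, LinearMap.comp_sub, LinearMap.sub_comp, h₁, h₂]

end Intertwines

end Intertwining

section WeightedShift

variable {G R : Type*} [Add G] [CommSemiring R]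

def weightedShift (c : G → R) (d : G) : Module.End R (G →₀ R) :=
  Finsupp.lsum R fun q => LinearMap.toSpanSingleton R _ (Finsupp.single (q + d) (c q))

@[simp]
theorem weightedShift_single (c : G → R) (d q : G) (a : R) :
    weightedShift c d (Finsupp.single q a) = (a * c q) • Finsupp.single (q + d) 1 := by
  simp [weightedShift, Finsupp.smul_single]

end WeightedShift

abbrev LatticeEnd : Type := Module.End ℂ (ℤ × ℤ →₀ ℂ)

def sZz (s : ℂ) : LatticeEnd := weightedShift (fun q => s - q.1) 0
def sPz : LatticeEnd := weightedShift (fun q => q.1) (-1, 0)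
def sMz (s : ℂ) : LatticeEnd := weightedShift (fun q => 2 * s - q.1) (1, 0)
def tZz (t : ℂ) : LatticeEnd := weightedShift (fun q => t - q.2) 0
def tPz : LatticeEnd := weightedShift (fun q => q.2) (0, -1)
def tMz (t : ℂ) : LatticeEnd := weightedShift (fun q => 2 * t - q.2) (0, 1)

def Tz (s t : ℂ) : LatticeEnd := sPz * tPz + sMz s * tMz t + (2:ℂ) • (sZz s * tZz t)
def Vz (s t : ℂ) : LatticeEnd := sPz * tPz - sMz s * tMz t

theorem Tz_Vz_identity (s t : ℂ) :
    Tz s t * (Tz s t * Vz s t - Vz s t * Tz s t)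
        - (Tz s t * Vz s t - Vz s t * Tz s t) * Tz s t
        + (2:ℂ) • (Tz s t * Vz s t + Vz s t * Tz s t)
      = (4 * (s*(s+1) + t*(t+1))) • Vz s t := by
  refine Finsupp.lhom_ext fun ⟨k, l⟩ b => ?_
  simp only [Tz, Vz, sZz, sPz, sMz, tZz, tPz, tMz, Module.End.mul_apply, LinearMap.add_apply,
    LinearMap.sub_apply, LinearMap.smul_apply, map_add, map_sub, map_smul, weightedShift_single,
    Prod.mk_add_mk, add_zero, ← sub_eq_add_neg, sub_add_cancel, add_sub_cancel_right]
  push_cast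
  module

def latticeEmbedding : Wsp →ₗ[ℂ] (ℤ × ℤ →₀ ℂ) :=
  Finsupp.lmapDomain ℂ ℂ (Prod.map Nat.cast Nat.cast)

theorem latticeEmbedding_injective : Function.Injective latticeEmbedding :=
  Finsupp.mapDomain_injective (Nat.cast_injective.prodMap Nat.cast_injective)

theorem latticeEmbedding_single (k l : ℕ) (a : ℂ) :
    latticeEmbedding (Finsupp.single (k, l) a) = Finsupp.single ((k : ℤ), (l : ℤ)) a := by
  simp [latticeEmbedding]

theorem intertwines_mkOpW_weightedShift {v : ℕ × ℕ → Wsp} {c : ℤ × ℤ → ℂ} {d : ℤ × ℤ}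
    (h : ∀ k l : ℕ,
      latticeEmbedding (v (k, l)) = c (k, l) • Finsupp.single (((k : ℤ), (l : ℤ)) + d) 1) :
    Intertwines latticeEmbedding (mkOpW v) (weightedShift c d) := by
  refine Finsupp.lhom_ext fun ⟨k, l⟩ b => ?_
  simp [mkOpW, latticeEmbedding_single, h]

theorem intertwines_sZu (s : ℂ) : Intertwines latticeEmbedding (sZu s) (sZz s) :=
  intertwines_mkOpW_weightedShift fun k l => by
    rw [latticeEmbedding_single, Finsupp.smul_single_one]; simp

/- The truncation `𝐬⁺|0,l⟩ = 0` is harmless because the lattice coefficient `k` vanishes at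
`k = 0`; `𝐬⁻` never leaves `ℕ × ℕ`. -/
theorem intertwines_sPu : Intertwines latticeEmbedding sPu sPz := by
  refine intertwines_mkOpW_weightedShift fun k l => ?_
  rcases k with _ | k <;> simp [latticeEmbedding_single]

theorem intertwines_sMu (s : ℂ) : Intertwines latticeEmbedding (sMu s) (sMz s) :=
  intertwines_mkOpW_weightedShift fun k l => by
    rw [latticeEmbedding_single, Finsupp.smul_single_one]; simp

theorem intertwines_tZu (t : ℂ) : Intertwines latticeEmbedding (tZu t) (tZz t) :=
  intertwines_mkOpW_weightedShift fun k l => by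
    rw [latticeEmbedding_single, Finsupp.smul_single_one]; simp

theorem intertwines_tPu : Intertwines latticeEmbedding tPu tPz := by
  refine intertwines_mkOpW_weightedShift fun k l => ?_
  rcases l with _ | l <;> simp [latticeEmbedding_single]

theorem intertwines_tMu (t : ℂ) : Intertwines latticeEmbedding (tMu t) (tMz t) :=
  intertwines_mkOpW_weightedShift fun k l => by
    rw [latticeEmbedding_single, Finsupp.smul_single_one]; simp

theorem intertwines_Tu (s t : ℂ) : Intertwines latticeEmbedding (Tu s t) (Tz s t) :=
  ((intertwines_sPu.mul intertwines_tPu).add ((intertwines_sMu s).mul (intertwines_tMu t))).add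
    (((intertwines_sZu s).mul (intertwines_tZu t)).smul 2)

theorem intertwines_Vu (s t : ℂ) : Intertwines latticeEmbedding (Vu s t) (Vz s t) :=
  (intertwines_sPu.mul intertwines_tPu).sub ((intertwines_sMu s).mul (intertwines_tMu t))

/-- the algebraic identity
`[T,[T,V]] + 2{T,V} = 4(s(s+1) + t(t+1))·V`. -/
theorem stmt11 (s t : ℂ) :
    Tu s t * (Tu s t * Vu s t - Vu s t * Tu s t)
        - (Tu s t * Vu s t - Vu s t * Tu s t) * Tu s t
        + (2:ℂ) • (Tu s t * Vu s t + Vu s t * Tu s t)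
      = (4 * (s*(s+1) + t*(t+1))) • Vu s t := by
  have hT := intertwines_Tu s t
  have hV := intertwines_Vu s t
  have hTV := (hT.mul hV).sub (hV.mul hT)
  have hlhs := ((hT.mul hTV).sub (hTV.mul hT)).add (((hT.mul hV).add (hV.mul hT)).smul 2)
  exact hlhs.eq_of_injective (hV.smul _) (Tz_Vz_identity s t) latticeEmbedding_injective

end
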